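/- Let S be a noetherian ring graded by a free abelian group D of finite rank, let M = ⊕_{i=1}^r ℕd_i ⊆ D be a quadrant (the d_i being part of a ℤ-basis of D), and let e ∈ D. Then S_{M+e} = ⊕_{d∈M} S_{d+e} is a finitely generated module over the Veronese subring S_M = ⊕_{d∈M} S_d. -/

import Mathlib

/-!
Write the quadrant `M` as a polyhedral cone `{d | ∀ φ ∈ s, 0 ≤ φ d}` cut out by finitely many
linear forms `φ : D →+ ℤ` (the coordinates of the basis, and their negatives off `J`); then
`M + e = {c | ∀ φ ∈ s, φ e ≤ φ c}`. Writing `S_T = veronese 𝒜 T` and `S_U = supportedIn 𝒜 U`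
and adding the half-spaces one at a time, it suffices to show:
if `S_T` is noetherian and `S_U` is a finitely generated `S_T`-module, then `S_{T ∩ {φ ≥ 0}}` is
noetherian and `S_{U ∩ {φ ≥ k}}` is finitely generated over it.

Over `S_{T₀}`, `T₀ = T ∩ {φ = 0}`, projecting onto `φ`-degree `m` is linear, so an
`S_{T₀}`-submodule `N` of `S_{U ∩ {φ = m}}` is generated by any finite subset of `N` that
generates `S_T · N`. In particular `S_{T₀}` is noetherian and each slice `S_{U ∩ {φ = m}}` is
finite over it. For a submodule `Q` of `S_{U ∩ {φ ≥ k}}` over `S_{T ∩ {φ ≥ 0}}`, choose finitely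
many generators `z ∈ Q` of `S_T · Q`, all of `φ`-degree `< B`. In `x = ∑ f_z z` keep the
components of the coefficients of nonnegative degree; what remains lies in `Q` and in the strip
`S_{U ∩ {k ≤ φ < B}}`, a finite sum of slices, hence in a finitely generated `S_{T₀}`-module.
-/

open DirectSum Submodule

section Graded

variable {D S : Type*} [AddCommMonoid D] [DecidableEq D] [Ring S]
  (𝒜 : D → AddSubgroup S) [GradedRing 𝒜]

def supportedIn (X : Set D) : AddSubgroup S where
  carrier := {x | ∀ d ∉ X, decompose 𝒜 x d = 0}
  add_mem' {x y} hx hy d hd := by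
    rw [decompose_add, DFinsupp.add_apply, hx d hd, hy d hd, add_zero]
  zero_mem' d _ := by rw [decompose_zero]; rfl
  neg_mem' {x} hx d hd := by rw [decompose_neg, DFinsupp.neg_apply, hx d hd, neg_zero]

open Classical in
noncomputable def projOn (X : Set D) : S →+ S :=
  (decomposeAddEquiv 𝒜).symm.toAddMonoidHom.comp
    ((DFinsupp.filterAddMonoidHom (fun d => 𝒜 d) (· ∈ X)).comp
      (decomposeAddEquiv 𝒜).toAddMonoidHom)

variable {𝒜} {X Y Z : Set D} {x y : S}

theorem mem_supportedIn_of_mem {d : D} (hd : d ∈ X) (hx : x ∈ 𝒜 d) : x ∈ supportedIn 𝒜 X :=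
  fun _ hc => Subtype.ext (decompose_of_mem_ne 𝒜 hx (ne_of_mem_of_not_mem hd hc))

theorem supportedIn_mono (h : X ⊆ Y) : supportedIn 𝒜 X ≤ supportedIn 𝒜 Y :=
  fun _ hx d hd => hx d (fun hdX => hd (h hdX))

theorem supportedIn_univ (x : S) : x ∈ supportedIn 𝒜 Set.univ :=
  fun _ hd => absurd trivial hd

theorem supportedIn_inter :
    supportedIn 𝒜 (X ∩ Y) = supportedIn 𝒜 X ⊓ supportedIn 𝒜 Y := by
  refine le_antisymm (le_inf (supportedIn_mono Set.inter_subset_left)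
    (supportedIn_mono Set.inter_subset_right)) fun x ⟨hX, hY⟩ d hd => ?_
  by_cases hdX : d ∈ X
  · exact hY d fun hdY => hd ⟨hdX, hdY⟩
  · exact hX d hdX

@[elab_as_elim]
theorem supportedIn_induction {P : (x : S) → x ∈ supportedIn 𝒜 X → Prop}
    (mem : ∀ d (hd : d ∈ X) x (hx : x ∈ 𝒜 d), P x (mem_supportedIn_of_mem hd hx))
    (zero : P 0 (zero_mem _))
    (add : ∀ x y hx hy, P x hx → P y hy → P (x + y) (add_mem hx hy))
    (hx : x ∈ supportedIn 𝒜 X) : P x hx := by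
  classical
  suffices ∃ hx', P x hx' from this.elim fun _ h => h
  rw [← sum_support_decompose 𝒜 x]
  refine Finset.sum_induction _ (fun x => ∃ hx, P x hx) (fun x y ⟨hx, hPx⟩ ⟨hy, hPy⟩ =>
    ⟨_, add x y hx hy hPx hPy⟩) ⟨_, zero⟩ fun d hd => ⟨_, mem d ?_ _ (decompose 𝒜 x d).2⟩
  by_contra hdX
  exact DFinsupp.mem_support_iff.1 hd (hx d hdX)

theorem mul_mem_supportedIn (h : ∀ a ∈ X, ∀ b ∈ Y, a + b ∈ Z) (hx : x ∈ supportedIn 𝒜 X)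
    (hy : y ∈ supportedIn 𝒜 Y) : x * y ∈ supportedIn 𝒜 Z := by
  induction hx using supportedIn_induction with
  | zero => rw [zero_mul]; exact zero_mem _
  | add x x' _ _ hx hx' => rw [add_mul]; exact add_mem hx hx'
  | mem a ha x hx =>
    induction hy using supportedIn_induction with
    | zero => rw [mul_zero]; exact zero_mem _
    | add y y' _ _ hy hy' => rw [mul_add]; exact add_mem hy hy'
    | mem b hb y hy =>
      exact mem_supportedIn_of_mem (h a ha b hb) (SetLike.mul_mem_graded hx hy)

theorem decompose_projOn_of_mem {d : D} (hd : d ∈ X) (x : S) :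
    decompose 𝒜 (projOn 𝒜 X x) d = decompose 𝒜 x d := by
  simp [projOn, decomposeAddEquiv, hd]

theorem decompose_projOn_of_not_mem {d : D} (hd : d ∉ X) (x : S) :
    decompose 𝒜 (projOn 𝒜 X x) d = 0 := by
  simp [projOn, decomposeAddEquiv, hd]

theorem projOn_eq_self (hx : x ∈ supportedIn 𝒜 X) (hXY : X ⊆ Y) : projOn 𝒜 Y x = x := by
  refine (decompose 𝒜).injective (DFinsupp.ext fun d => ?_)
  by_cases hd : d ∈ Y
  · exact decompose_projOn_of_mem hd x
  · rw [decompose_projOn_of_not_mem hd, hx d fun hdX => hd (hXY hdX)]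

theorem projOn_eq_zero (hx : x ∈ supportedIn 𝒜 X) (hXY : Disjoint X Y) :
    projOn 𝒜 Y x = 0 := by
  refine (decompose 𝒜).injective (DFinsupp.ext fun d => ?_)
  rw [decompose_zero, DFinsupp.zero_apply]
  by_cases hd : d ∈ Y
  · rw [decompose_projOn_of_mem hd, hx d (Set.disjoint_right.1 hXY hd)]
  · exact decompose_projOn_of_not_mem hd x

theorem projOn_mem_supportedIn (x : S) : projOn 𝒜 X x ∈ supportedIn 𝒜 X :=
  fun _ hd => decompose_projOn_of_not_mem hd x

theorem projOn_mem_supportedIn_inter (hx : x ∈ supportedIn 𝒜 X) :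
    projOn 𝒜 Y x ∈ supportedIn 𝒜 (X ∩ Y) := by
  rw [supportedIn_inter]
  refine ⟨fun d hd => ?_, projOn_mem_supportedIn x⟩
  by_cases hdY : d ∈ Y
  · rw [decompose_projOn_of_mem hdY, hx d hd]
  · exact decompose_projOn_of_not_mem hdY x

theorem projOn_add_projOn_compl (x : S) : projOn 𝒜 X x + projOn 𝒜 Xᶜ x = x := by
  refine (decompose 𝒜).injective (DFinsupp.ext fun d => ?_)
  rw [decompose_add, DFinsupp.add_apply]
  by_cases hd : d ∈ X
  · rw [decompose_projOn_of_mem hd, decompose_projOn_of_not_mem (Set.notMem_compl_iff.2 hd),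
      add_zero]
  · rw [decompose_projOn_of_not_mem hd, decompose_projOn_of_mem hd, zero_add]

theorem projOn_mul_of_mem {c : D} (hXY : ∀ a, a + c ∈ X ↔ a ∈ Y) {z : S} (hz : z ∈ 𝒜 c)
    (x : S) : projOn 𝒜 X (x * z) = projOn 𝒜 Y x * z := by
  induction supportedIn_univ (𝒜 := 𝒜) x using supportedIn_induction with
  | zero => simp
  | add x x' _ _ hx hx' => simp only [add_mul, map_add, hx, hx']
  | mem a _ x hx =>
    have hxz :=
      mem_supportedIn_of_mem (Set.mem_singleton (a + c)) (SetLike.mul_mem_graded hx hz)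
    have hx := mem_supportedIn_of_mem (Set.mem_singleton a) hx
    by_cases ha : a ∈ Y
    · rw [projOn_eq_self hxz (by simpa [hXY]), projOn_eq_self hx (by simpa)]
    · rw [projOn_eq_zero hxz (by simpa [hXY]), projOn_eq_zero hx (by simpa), zero_mul]

theorem projOn_mul_of_mem_supportedIn {Y' : Set D}
    (hXY : ∀ a, ∀ c ∈ Y', a + c ∈ X ↔ a ∈ Y) {z : S} (hz : z ∈ supportedIn 𝒜 Y')
    (x : S) : projOn 𝒜 X (x * z) = projOn 𝒜 Y x * z := by
  induction hz using supportedIn_induction with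
  | zero => simp
  | add z z' _ _ hz hz' => simp only [mul_add, map_add, hz, hz']
  | mem c hc z hz => exact projOn_mul_of_mem (fun a => hXY a c hc) hz x

variable (𝒜) in
def veronese (T : AddSubmonoid D) : Subring S where
  __ := supportedIn 𝒜 T
  one_mem' := mem_supportedIn_of_mem T.zero_mem SetLike.GradedOne.one_mem
  mul_mem' := mul_mem_supportedIn fun _ ha _ hb => T.add_mem ha hb

variable {T T' : AddSubmonoid D}

theorem veronese_mono (h : T ≤ T') : veronese 𝒜 T ≤ veronese 𝒜 T' :=
  supportedIn_mono (𝒜 := 𝒜) h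

theorem veronese_top : veronese 𝒜 ⊤ = ⊤ :=
  eq_top_iff.2 fun x _ => supportedIn_univ x

theorem closure_eq_veronese (T : AddSubmonoid D) :
    Subring.closure (⋃ d ∈ T, (𝒜 d : Set S)) = veronese 𝒜 T := by
  refine le_antisymm (Subring.closure_le.2 <| Set.iUnion₂_subset fun d hd x hx =>
    mem_supportedIn_of_mem hd hx) fun x (hx : x ∈ supportedIn 𝒜 T) => ?_
  induction hx using supportedIn_induction with
  | mem d hd y hy => exact Subring.subset_closure (Set.mem_biUnion hd hy)
  | zero => exact zero_mem _
  | add y y' _ _ hy hy' => exact add_mem hy hy'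

theorem span_iUnion_eq_span_supportedIn (R : Subring S) (X : Set D) :
    span R (⋃ d ∈ X, (𝒜 d : Set S)) = span R (supportedIn 𝒜 X : Set S) := by
  refine le_antisymm (span_mono <| Set.iUnion₂_subset fun d hd x hx =>
    mem_supportedIn_of_mem hd hx) (span_le.2 fun x hx => ?_)
  induction hx using supportedIn_induction with
  | mem d hd y hy => exact subset_span (Set.mem_biUnion hd hy)
  | zero => exact zero_mem _
  | add y y' _ _ hy hy' => exact add_mem hy hy'

theorem coe_span_supportedIn {U : Set D} (hTU : ∀ a ∈ T, ∀ b ∈ U, a + b ∈ U) :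
    (span (veronese 𝒜 T) (supportedIn 𝒜 U : Set S) : Set S) = supportedIn 𝒜 U := by
  refine subset_antisymm (fun x hx => ?_) subset_span
  induction hx using span_induction with
  | mem y hy => exact hy
  | zero => exact zero_mem _
  | add y y' _ _ hy hy' => exact add_mem hy hy'
  | smul r y _ hy => exact mul_mem_supportedIn hTU r.2 hy

theorem fg_span_supportedIn_self (T : AddSubmonoid D) :
    (span (veronese 𝒜 T) (supportedIn 𝒜 T : Set S)).FG := by
  refine ⟨{1}, le_antisymm (span_le.2 ?_) (span_le.2 fun x hx => ?_)⟩
  · rw [Finset.coe_singleton, Set.singleton_subset_iff]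
    exact subset_span (veronese 𝒜 T).one_mem
  · simpa using mem_span_singleton.2 ⟨⟨x, hx⟩, mul_one x⟩

theorem span_subring_mono {R R' : Subring S} (h : R ≤ R') {s : Set S} :
    (span R s : Set S) ⊆ span R' s := fun x hx => by
  induction hx using span_induction with
  | mem y hy => exact subset_span hy
  | zero => exact zero_mem _
  | add y y' _ _ hy hy' => exact add_mem hy hy'
  | smul r y _ hy => exact smul_mem _ (⟨r, h r.2⟩ : R') hy

theorem isNoetherianRing_of_forall_fg {R : Subring S}
    (h : ∀ N : Submodule R S, (N : Set S) ⊆ R → N.FG) : IsNoetherianRing R := by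
  refine (isNoetherianRing_iff_ideal_fg R).2 fun I => ?_
  refine fg_of_fg_map_injective (LinearMap.toSpanSingleton R S 1)
    (fun r r' h => Subtype.ext (by simpa [Subring.smul_def] using h)) (h _ ?_)
  rintro _ ⟨r, -, rfl⟩
  simp [Subring.smul_def]

theorem exists_forall_mem_supportedIn_lt (φ : D →+ ℤ) (F : Finset S) :
    ∃ B : ℤ, ∀ z ∈ F, z ∈ supportedIn 𝒜 {c | φ c < B} := by
  classical
  obtain ⟨B, hB⟩ := (F.biUnion fun z => (decompose 𝒜 z).support.image φ).exists_le
  refine ⟨B + 1, fun z hz d hd => ?_⟩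
  by_contra h
  have := hB (φ d) (Finset.mem_biUnion.2 ⟨z, hz, Finset.mem_image_of_mem φ
    (DFinsupp.mem_support_iff.2 h)⟩)
  exact hd (by change φ d < B + 1; omega)

theorem exists_sub_mem_span_inf_halfspace (φ : D →+ ℤ) {F : Finset S} {B : ℤ}
    (hB : ∀ z ∈ F, z ∈ supportedIn 𝒜 {c | φ c < B}) {x : S}
    (hx : x ∈ span (veronese 𝒜 T) (F : Set S)) :
    ∃ w ∈ span (veronese 𝒜 (T ⊓ (AddSubmonoid.nonneg ℤ).comap φ)) (F : Set S),
      x - w ∈ supportedIn 𝒜 {c | φ c < B} := by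
  obtain ⟨f, -, rfl⟩ := mem_span_finset.1 hx
  refine ⟨∑ z ∈ F, projOn 𝒜 {d | 0 ≤ φ d} (f z) * z, sum_mem fun z hz => ?_, ?_⟩
  · exact smul_mem (span _ _) (⟨_, projOn_mem_supportedIn_inter (f z).2⟩ :
      veronese 𝒜 (T ⊓ (AddSubmonoid.nonneg ℤ).comap φ)) (subset_span hz)
  rw [← Finset.sum_sub_distrib]
  refine sum_mem fun z hz => ?_
  rw [Subring.smul_def, smul_eq_mul, ← sub_mul,
    sub_eq_iff_eq_add'.2 (projOn_add_projOn_compl _).symm]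
  refine mul_mem_supportedIn ?_ (projOn_mem_supportedIn _) (hB z hz)
  intro a (ha : ¬ 0 ≤ φ a) b (hb : φ b < B)
  change φ (a + b) < B
  rw [map_add]
  omega

section Noetherian

variable {U : Set D} [IsNoetherianRing (veronese 𝒜 T)]

theorem exists_finset_subset_span_of_subset_supportedIn
    (hU : (span (veronese 𝒜 T) (supportedIn 𝒜 U : Set S)).FG) {Q : Set S}
    (hQ : Q ⊆ supportedIn 𝒜 U) :
    ∃ F : Finset S, ↑F ⊆ Q ∧ Q ⊆ (span (veronese 𝒜 T) (F : Set S) : Set S) := by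
  obtain ⟨F, hFQ, hQF⟩ := (fg_span_iff_fg_span_finset_subset Q).1 (hU.of_le (span_mono hQ))
  exact ⟨F, hFQ, hQF ▸ subset_span⟩

theorem fg_of_subset_supportedIn_level
    (hU : (span (veronese 𝒜 T) (supportedIn 𝒜 U : Set S)).FG) (φ : D →+ ℤ) (m : ℤ)
    (N : Submodule (veronese 𝒜 (T ⊓ AddMonoidHom.mker φ)) S)
    (hN : (N : Set S) ⊆ supportedIn 𝒜 (U ∩ {c | φ c = m})) : N.FG := by
  have hNm : (N : Set S) ⊆ supportedIn 𝒜 {c | φ c = m} :=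
    hN.trans (supportedIn_mono Set.inter_subset_right)
  obtain ⟨F, hFN, hNF⟩ := exists_finset_subset_span_of_subset_supportedIn hU
    (hN.trans (supportedIn_mono Set.inter_subset_left))
  refine ⟨F, le_antisymm (span_le.2 hFN) fun x hx => ?_⟩
  have hxm := hNm hx
  obtain ⟨f, -, rfl⟩ := mem_span_finset.1 (hNF hx)
  rw [← projOn_eq_self hxm subset_rfl, map_sum]
  refine sum_mem fun z hz => ?_
  have hfz : projOn 𝒜 {d | φ d = 0} (f z) ∈ veronese 𝒜 (T ⊓ AddMonoidHom.mker φ) :=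
    projOn_mem_supportedIn_inter (f z).2
  rw [Subring.smul_def, smul_eq_mul, projOn_mul_of_mem_supportedIn (Y := {d | φ d = 0})
    (fun a c (hc : φ c = m) => by simp [hc]) (hNm (hFN hz))]
  exact smul_mem (span _ _) (⟨_, hfz⟩ : veronese 𝒜 (T ⊓ AddMonoidHom.mker φ)) (subset_span hz)

theorem isNoetherianRing_veronese_inf_mker (φ : D →+ ℤ) :
    IsNoetherianRing (veronese 𝒜 (T ⊓ AddMonoidHom.mker φ)) :=
  isNoetherianRing_of_forall_fg fun N hN =>
    fg_of_subset_supportedIn_level (fg_span_supportedIn_self T) φ 0 N hN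

theorem fg_span_supportedIn_inter_level
    (hU : (span (veronese 𝒜 T) (supportedIn 𝒜 U : Set S)).FG)
    (hTU : ∀ a ∈ T, ∀ b ∈ U, a + b ∈ U) (φ : D →+ ℤ) (m : ℤ) :
    (span (veronese 𝒜 (T ⊓ AddMonoidHom.mker φ))
      (supportedIn 𝒜 (U ∩ {c | φ c = m}) : Set S)).FG := by
  refine fg_of_subset_supportedIn_level hU φ m _ (coe_span_supportedIn ?_).subset
  rintro a ⟨haT, ha⟩ b ⟨hbU, hb : φ b = m⟩
  refine ⟨hTU a haT b hbU, ?_⟩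
  change φ (a + b) = m
  rw [map_add, AddMonoidHom.mem_mker.1 ha, hb, zero_add]

theorem fg_span_of_subset_supportedIn_strip
    (hU : (span (veronese 𝒜 T) (supportedIn 𝒜 U : Set S)).FG)
    (hTU : ∀ a ∈ T, ∀ b ∈ U, a + b ∈ U) (φ : D →+ ℤ) (k B : ℤ) {Q : Set S}
    (hQ : Q ⊆ supportedIn 𝒜 (U ∩ {c | k ≤ φ c ∧ φ c < B})) :
    (span (veronese 𝒜 (T ⊓ AddMonoidHom.mker φ)) Q).FG := by
  have := isNoetherianRing_veronese_inf_mker (𝒜 := 𝒜) (T := T) φ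
  refine (fg_biSup (Finset.Ico k B) _ fun m _ =>
    fg_span_supportedIn_inter_level hU hTU φ m).of_le (span_le.2 (hQ.trans fun x hx => ?_))
  induction hx using supportedIn_induction with
  | mem d hd y hy =>
    exact le_biSup (fun m => span _ (supportedIn 𝒜 (U ∩ {c | φ c = m}) : Set S))
      (Finset.mem_Ico.2 hd.2) (subset_span (mem_supportedIn_of_mem ⟨hd.1, rfl⟩ hy))
  | zero => exact zero_mem _
  | add y y' _ _ hy hy' => exact add_mem hy hy'

theorem fg_of_subset_supportedIn_inter_halfspace
    (hU : (span (veronese 𝒜 T) (supportedIn 𝒜 U : Set S)).FG)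
    (hTU : ∀ a ∈ T, ∀ b ∈ U, a + b ∈ U) (φ : D →+ ℤ) (k : ℤ)
    (Q : Submodule (veronese 𝒜 (T ⊓ (AddSubmonoid.nonneg ℤ).comap φ)) S)
    (hQ : (Q : Set S) ⊆ supportedIn 𝒜 (U ∩ {c | k ≤ φ c})) : Q.FG := by
  classical
  obtain ⟨F, hFQ, hQF⟩ := exists_finset_subset_span_of_subset_supportedIn hU
    (hQ.trans (supportedIn_mono Set.inter_subset_left))
  obtain ⟨B, hB⟩ := exists_forall_mem_supportedIn_lt (𝒜 := 𝒜) φ F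
  set V := U ∩ {c | k ≤ φ c ∧ φ c < B}
  obtain ⟨F', hF'Q, hQF'⟩ := (fg_span_iff_fg_span_finset_subset _).1
    (fg_span_of_subset_supportedIn_strip hU hTU φ k B
      (Set.inter_subset_right (s := (Q : Set S)) (t := supportedIn 𝒜 V)))
  refine ⟨F ∪ F', le_antisymm (span_le.2 ?_) fun x hx => ?_⟩
  · rw [Finset.coe_union]
    exact Set.union_subset hFQ (hF'Q.trans Set.inter_subset_left)
  obtain ⟨w, hw, hxwB⟩ := exists_sub_mem_span_inf_halfspace φ hB (hQF hx)
  have hxwQ : x - w ∈ Q := sub_mem hx (span_le.2 hFQ hw)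
  have hxwV : x - w ∈ supportedIn 𝒜 V := by
    refine supportedIn_mono (X := U ∩ {c | k ≤ φ c} ∩ {c | φ c < B})
      (Y := V) (fun c ⟨⟨hcU, hck⟩, hcB⟩ => ⟨hcU, hck, hcB⟩) ?_
    rw [supportedIn_inter]
    exact ⟨hQ hxwQ, hxwB⟩
  have hxwF' :
      x - w ∈ span (veronese 𝒜 (T ⊓ (AddSubmonoid.nonneg ℤ).comap φ)) (F' : Set S) := by
    have hker : AddMonoidHom.mker φ ≤ (AddSubmonoid.nonneg ℤ).comap φ :=
      fun d (hd : φ d = 0) => AddSubmonoid.mem_nonneg.2 hd.ge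
    refine span_subring_mono (veronese_mono (inf_le_inf_left T hker)) ?_
    rw [← hQF']
    exact subset_span ⟨hxwQ, hxwV⟩
  rw [← sub_add_cancel x w, Finset.coe_union]
  exact add_mem (span_mono Set.subset_union_right hxwF') (span_mono Set.subset_union_left hw)

theorem isNoetherianRing_veronese_inf_halfspace (φ : D →+ ℤ) :
    IsNoetherianRing (veronese 𝒜 (T ⊓ (AddSubmonoid.nonneg ℤ).comap φ)) :=
  isNoetherianRing_of_forall_fg fun N hN =>
    fg_of_subset_supportedIn_inter_halfspace (fg_span_supportedIn_self T)
      (fun _ ha _ hb => T.add_mem ha hb) φ 0 N hN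

theorem fg_span_supportedIn_inter_halfspace
    (hU : (span (veronese 𝒜 T) (supportedIn 𝒜 U : Set S)).FG)
    (hTU : ∀ a ∈ T, ∀ b ∈ U, a + b ∈ U) (φ : D →+ ℤ) (k : ℤ) :
    (span (veronese 𝒜 (T ⊓ (AddSubmonoid.nonneg ℤ).comap φ))
      (supportedIn 𝒜 (U ∩ {c | k ≤ φ c}) : Set S)).FG := by
  refine fg_of_subset_supportedIn_inter_halfspace hU hTU φ k _ (coe_span_supportedIn ?_).subset
  rintro a ⟨haT, ha : 0 ≤ φ a⟩ b ⟨hbU, hb : k ≤ φ b⟩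
  refine ⟨hTU a haT b hbU, ?_⟩
  change k ≤ φ (a + b)
  rw [map_add]
  omega

end Noetherian

end Graded

section Cone

variable {D : Type*} [AddCommGroup D]

def polyhedralCone (s : Set (D →+ ℤ)) : AddSubmonoid D where
  carrier := {d | ∀ φ ∈ s, 0 ≤ φ d}
  zero_mem' φ _ := by rw [map_zero]
  add_mem' ha hb φ hφ := by rw [map_add]; exact add_nonneg (ha φ hφ) (hb φ hφ)

theorem mem_polyhedralCone {s : Set (D →+ ℤ)} {d : D} :
    d ∈ polyhedralCone s ↔ ∀ φ ∈ s, 0 ≤ φ d := Iff.rfl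

theorem polyhedralCone_empty : polyhedralCone (∅ : Set (D →+ ℤ)) = ⊤ :=
  eq_top_iff.2 fun _ _ _ h => absurd h (Set.notMem_empty _)

theorem polyhedralCone_insert (φ : D →+ ℤ) (s : Set (D →+ ℤ)) :
    polyhedralCone (insert φ s) = polyhedralCone s ⊓ (AddSubmonoid.nonneg ℤ).comap φ := by
  ext d
  simp [mem_polyhedralCone, and_comm]

theorem Module.Basis.closure_image_eq_polyhedralCone {ι : Type*} (b : Module.Basis ι ℤ D)
    (J : Set ι) : AddSubmonoid.closure (b '' J) = polyhedralCone
      (Set.range (fun i => (b.coord i).toAddMonoidHom) ∪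
        (fun i => -(b.coord i).toAddMonoidHom) '' Jᶜ) := by
  set s : Set (D →+ ℤ) := Set.range (fun i => (b.coord i).toAddMonoidHom) ∪
    (fun i => -(b.coord i).toAddMonoidHom) '' Jᶜ
  have key : ∀ d, d ∈ polyhedralCone s ↔ ∀ i, 0 ≤ b.repr d i ∧ (i ∉ J → b.repr d i ≤ 0) := by
    intro d
    simp only [s, mem_polyhedralCone, Set.mem_union, or_imp, forall_and, Set.forall_mem_range,
      Set.forall_mem_image]
    simp
  refine le_antisymm (AddSubmonoid.closure_le.2 ?_) fun d hd => ?_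
  · rintro _ ⟨j, hj, rfl⟩
    rw [SetLike.mem_coe, key]
    intro i
    by_cases hij : j = i
    · subst hij; simp [hj]
    · simp [hij]
  · rw [key] at hd
    rw [← b.linearCombination_repr d, Finsupp.linearCombination_apply]
    refine AddSubmonoidClass.finsuppSum_mem _ _ _ fun i _ => ?_
    by_cases hi : i ∈ J
    · rw [← Int.toNat_of_nonneg (hd i).1, natCast_zsmul]
      exact nsmul_mem (AddSubmonoid.subset_closure (Set.mem_image_of_mem b hi)) _
    · rw [le_antisymm ((hd i).2 hi) (hd i).1, zero_smul]
      exact zero_mem _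

variable {S : Type*} [DecidableEq D] [Ring S] {𝒜 : D → AddSubgroup S} [GradedRing 𝒜]

theorem span_iUnion_add_eq_span_supportedIn (R : Subring S) (T : AddSubmonoid D) (e : D) :
    span R (⋃ d ∈ T, (𝒜 (d + e) : Set S)) =
      span R (supportedIn 𝒜 {c | c - e ∈ T} : Set S) := by
  rw [← span_iUnion_eq_span_supportedIn]
  congr 1
  ext x
  simp only [Set.mem_iUnion]
  constructor
  · rintro ⟨d, hd, hx⟩
    exact ⟨d + e, by simpa using hd, hx⟩
  · rintro ⟨c, hc, hx⟩
    exact ⟨c - e, hc, by simpa using hx⟩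

theorem isNoetherianRing_veronese_polyhedralCone_and_fg_span_translate [IsNoetherianRing S]
    {s : Set (D →+ ℤ)} (hs : s.Finite) :
    IsNoetherianRing (veronese 𝒜 (polyhedralCone s)) ∧ ∀ e : D,
      (span (veronese 𝒜 (polyhedralCone s))
        (supportedIn 𝒜 {c | c - e ∈ polyhedralCone s} : Set S)).FG := by
  induction s, hs using Set.Finite.induction_on with
  | empty =>
    have : IsNoetherianRing (veronese 𝒜 (⊤ : AddSubmonoid D)) := by
      rw [veronese_top]
      exact isNoetherianRing_of_ringEquiv S Subring.topEquiv.symm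
    rw [polyhedralCone_empty]
    exact ⟨this, fun e =>
      (fg_span_supportedIn_self ⊤).of_le (span_mono (supportedIn_mono (Set.subset_univ _)))⟩
  | @insert φ s _ _ ih =>
    obtain ⟨_, hfg⟩ := ih
    rw [polyhedralCone_insert]
    refine ⟨isNoetherianRing_veronese_inf_halfspace φ, fun e => ?_⟩
    have hTU : ∀ a ∈ polyhedralCone s, ∀ c ∈ {c | c - e ∈ polyhedralCone s},
        a + c ∈ {c | c - e ∈ polyhedralCone s} := fun a ha c hc => by
      simpa [add_sub_assoc] using add_mem ha hc
    convert fg_span_supportedIn_inter_halfspace (hfg e) hTU φ (φ e) using 4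
    ext c
    simp

end Cone

/-- Let `S` be a noetherian ring graded by a free abelian group `D` of finite
rank, let `M = ⊕ ℕ·bⱼ (j ∈ J)` be a quadrant (generated by part of a `ℤ`-basis `b` of `D`),
and let `e ∈ D`. Then `S_{M+e} = ⊕_{d ∈ M} S_{d+e}` is a finitely generated module over the
Veronese subring `S_M` (here `S_M` is the subring generated by the pieces of degrees in `M`,
and `S_{M+e}` is its span, as an `S_M`-submodule of `S`, of the pieces of degrees in `M+e`). -/
theorem stmt_4 {ι D S : Type*} [Fintype ι] [AddCommGroup D] [DecidableEq D]
    [CommRing S] (𝒜 : D → AddSubgroup S) [GradedRing 𝒜] [IsNoetherianRing S]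
    (b : Module.Basis ι ℤ D) (J : Set ι) (e : D) :
    (Submodule.span
      (Subring.closure (⋃ d ∈ AddSubmonoid.closure (⇑b '' J), (𝒜 d : Set S)))
      (⋃ d ∈ AddSubmonoid.closure (⇑b '' J), (𝒜 (d + e) : Set S))).FG := by
  rw [closure_eq_veronese, span_iUnion_add_eq_span_supportedIn,
    b.closure_image_eq_polyhedralCone J]
  exact (isNoetherianRing_veronese_polyhedralCone_and_fg_span_translate (Set.toFinite _)).2 e
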